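/- Let N ∈ ℕ with N ≥ 1, let n ∈ {0, …, N−1}, and let a, α, β be real numbers; set b = a + N. Assume (a+b+1|q)_{N−n−1} (2a−β+1|q)_{N−n−1} (a−b−α+1|q)_{N−n−1} ≠ 0. Then Σ_{s=0}^{N−n−1} [(2a+n+1|q)_s (n+β+1|q)_s (n+a+α+b+1|q)_s (n+1−N|q)_s / ((1|q)_s (a+b+1|q)_s (2a−β+1|q)_s (a−b−α+1|q)_s)] · [2s+2a+n+1]_q = [2a+n+1]_q · (2a+n+2|q)_{N−n−1} (a−b−α−β−n|q)_{N−n−1} / ((2a−β+1|q)_{N−n−1} (a−b−α+1|q)_{N−n−1}). -/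

import Mathlib

open Finset

/-- The symmetric q-number `[s]_q = (q^{s/2} - q^{-s/2})/(q^{1/2} - q^{-1/2})`. -/
noncomputable def qnum (q s : ℝ) : ℝ :=
  (q ^ (s / 2) - q ^ (-s / 2)) / (q ^ ((1 : ℝ) / 2) - q ^ (-(1 : ℝ) / 2))

/-- The symmetric q-factorial `[n]_q! = ∏_{m=1}^n [m]_q`. -/
noncomputable def qfact (q : ℝ) (n : ℕ) : ℝ :=
  ∏ m ∈ Finset.range n, qnum q ((m : ℝ) + 1)

/-- The symmetric q-Pochhammer symbol `(a|q)_k = ∏_{m=0}^{k-1} [a+m]_q`. -/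
noncomputable def qpoch (q a : ℝ) (k : ℕ) : ℝ :=
  ∏ m ∈ Finset.range k, qnum q (a + (m : ℝ))

/-- The q-Racah polynomial `u_n^{α,β}(x(s),a,b)_q` on the lattice `x(s)=[s]_q[s+1]_q`. -/
noncomputable def racahU (q a b α β : ℝ) (n : ℕ) (s : ℝ) : ℝ :=
  qpoch q (a - b + 1) n * qpoch q (β + 1) n * qpoch q (a + b + α + 1) n / qfact q n *
    ∑ k ∈ Finset.range (n + 1),
      qpoch q (-(n : ℝ)) k * qpoch q (α + β + (n : ℝ) + 1) k * qpoch q (a - s) k *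
          qpoch q (a + s + 1) k /
        (qpoch q 1 k * qpoch q (a - b + 1) k * qpoch q (β + 1) k *
          qpoch q (a + b + α + 1) k)

/-- The alternative q-Racah polynomial `ũ_n^{α,β}(x(s),a,b)_q`. -/
noncomputable def racahUt (q a b α β : ℝ) (n : ℕ) (s : ℝ) : ℝ :=
  qpoch q (a - b + 1) n * qpoch q (2 * a - β + 1) n * qpoch q (a - b - α + 1) n / qfact q n *
    ∑ k ∈ Finset.range (n + 1),
      qpoch q (-(n : ℝ)) k * qpoch q (2 * a - 2 * b - α - β + (n : ℝ) + 1) k *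
          qpoch q (a - s) k * qpoch q (a + s + 1) k /
        (qpoch q 1 k * qpoch q (a - b + 1) k * qpoch q (2 * a - β + 1) k *
          qpoch q (a - b - α + 1) k)

/-- `σ(s) = [s-a]_q [s+b]_q [s+a-β]_q [b+α-s]_q`. -/
noncomputable def racahSigma (q a b α β s : ℝ) : ℝ :=
  qnum q (s - a) * qnum q (s + b) * qnum q (s + a - β) * qnum q (b + α - s)

/-- `σ(-s-1) = [s+a+1]_q [b-s-1]_q [s-a+β+1]_q [b+α+s+1]_q`. -/
noncomputable def racahSigmaM (q a b α β s : ℝ) : ℝ :=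
  qnum q (s + a + 1) * qnum q (b - s - 1) * qnum q (s - a + β + 1) * qnum q (b + α + s + 1)

/-- `σ̃(s) = [s-a]_q [s+b]_q [s-a+β]_q [b+α+s]_q`. -/
noncomputable def racahSigmaT (q a b α β s : ℝ) : ℝ :=
  qnum q (s - a) * qnum q (s + b) * qnum q (s - a + β) * qnum q (b + α + s)

/-- `σ̃(-s-1) = [s+a+1]_q [b-s-1]_q [s+a-β+1]_q [b+α-s-1]_q`. -/
noncomputable def racahSigmaTM (q a b α β s : ℝ) : ℝ :=
  qnum q (s + a + 1) * qnum q (b - s - 1) * qnum q (s + a - β + 1) * qnum q (b + α - s - 1)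

/-- `τ_n(s)` for the q-Racah polynomials. -/
noncomputable def racahTau (q a b α β : ℝ) (n : ℕ) (s : ℝ) : ℝ :=
  -qnum q (α + β + 2 * (n : ℝ) + 2) * qnum q (s + (n : ℝ) / 2) * qnum q (s + (n : ℝ) / 2 + 1) +
    qnum q (a + (n : ℝ) / 2 + 1) * qnum q (b - (n : ℝ) / 2 - 1) *
      qnum q (β + (n : ℝ) / 2 + 1 - a) * qnum q (b + α + (n : ℝ) / 2 + 1) -
    qnum q (a + (n : ℝ) / 2) * qnum q (b - (n : ℝ) / 2) * qnum q (β + (n : ℝ) / 2 - a) *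
      qnum q (b + α + (n : ℝ) / 2)

/-!
With `A = 2a+n+1`, `B = n+β+1`, `C = n+a+α+b+1` and `M = N-n-1` the sum is a q-analogue of the
terminating very-well-poised ₅F₄ summation, `[A + 2s] / [A]` being the very-well-poised factor.
After clearing denominators it becomes a Laurent-polynomial identity in `q^{A/2}, q^{B/2}, q^{C/2}`.
For generic `B` and `C` it follows by induction on `M`: consecutive cleared sums differ by a
telescoping sum (a WZ pair), and the telescoping relation reduces to one identity between eight
q-numbers. Both sides are continuous in `B` and `C`, and the exceptional values form a countable
set, so the identity holds for all parameters.
-/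

section QNumber

variable {q : ℝ}

lemma qnum_zero : qnum q 0 = 0 := by
  simp [qnum]

lemma qnum_neg (x : ℝ) : qnum q (-x) = -qnum q x := by
  rw [qnum, qnum, neg_neg]
  ring

lemma qnum_ne_zero (hq0 : 0 < q) (hq1 : q ≠ 1) {x : ℝ} (hx : x ≠ 0) : qnum q x ≠ 0 := by
  have key : ∀ y : ℝ, y ≠ 0 → q ^ (y / 2) - q ^ (-y / 2) ≠ 0 := fun y hy h =>
    hy (by linarith [(Real.rpow_right_inj hq0 hq1).1 (sub_eq_zero.1 h)])
  exact div_ne_zero (key x hx) (key 1 one_ne_zero)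

@[fun_prop]
lemma continuous_qnum (hq0 : 0 < q) : Continuous (qnum q) := by
  unfold qnum
  fun_prop (disch := exact hq0.ne')

lemma qnum_wz_identity (hq0 : 0 < q) (A B C S K : ℝ) :
    qnum q K * qnum q (A - B + K) * qnum q (A - C + K) * qnum q (A + 2 * S) +
        qnum q (A - B - C + K) * qnum q (A + 2 * S) * qnum q (S - K) * qnum q (A + K + S) =
      qnum q S * qnum q (A - B + S) * qnum q (A - C + S) * qnum q (A + K + S) -
        qnum q (A + S) * qnum q (B + S) * qnum q (C + S) * qnum q (S - K) := by
  rw [show A + 2 * S = A + S + S by ring]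
  simp only [qnum, div_mul_div_comm, ← add_div, ← sub_div]
  congr 1
  simp only [neg_div, add_div, sub_div, Real.rpow_add hq0, Real.rpow_sub hq0,
    Real.rpow_neg hq0.le]
  field_simp
  ring

end QNumber

section QPochhammer

variable {q : ℝ}

lemma qpoch_succ (x : ℝ) (k : ℕ) : qpoch q x (k + 1) = qpoch q x k * qnum q (x + k) :=
  prod_range_succ _ _

lemma qpoch_succ' (x : ℝ) (k : ℕ) : qpoch q x (k + 1) = qnum q x * qpoch q (x + 1) k := by
  rw [qpoch, prod_range_succ', qpoch, mul_comm]
  congr 1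
  · simp
  · exact prod_congr rfl fun i _ => by push_cast; ring_nf

lemma qpoch_add (x : ℝ) (i j : ℕ) : qpoch q x (i + j) = qpoch q x i * qpoch q (x + i) j := by
  rw [qpoch, prod_range_add, qpoch, qpoch]
  congr 1
  exact prod_congr rfl fun m _ => by push_cast; ring_nf

lemma qpoch_mul_qpoch_sub {s k : ℕ} (hs : s ≤ k) (x : ℝ) :
    qpoch q x s * qpoch q (x + s) (k - s) = qpoch q x k := by
  rw [← qpoch_add, Nat.add_sub_cancel' hs]

lemma qpoch_succ_sub {s k : ℕ} (hs : s ≤ k) (x : ℝ) :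
    qpoch q (x + s) (k + 1 - s) = qpoch q (x + s) (k - s) * qnum q (x + k) := by
  rw [Nat.sub_add_comm hs, qpoch_succ, Nat.cast_sub hs]
  ring_nf

lemma qpoch_succ_sub' {s k : ℕ} (hs : s ≤ k) (x : ℝ) :
    qpoch q (x + s) (k + 1 - s) = qnum q (x + s) * qpoch q (x + s + 1) (k - s) := by
  rw [Nat.sub_add_comm hs, qpoch_succ']

lemma qpoch_neg_natCast_of_lt {k s : ℕ} (h : k < s) : qpoch q (-(k : ℝ)) s = 0 :=
  prod_eq_zero (mem_range.2 h) (by rw [neg_add_cancel, qnum_zero])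

lemma qpoch_ne_zero_of_le {x : ℝ} {s k : ℕ} (h : qpoch q x k ≠ 0) (hs : s ≤ k) :
    qpoch q x s ≠ 0 := by
  rw [← qpoch_mul_qpoch_sub hs] at h
  exact left_ne_zero_of_mul h

lemma qpoch_one_ne_zero (hq0 : 0 < q) (hq1 : q ≠ 1) (k : ℕ) : qpoch q 1 k ≠ 0 :=
  prod_ne_zero_iff.2 fun m _ => qnum_ne_zero hq0 hq1 (by positivity)

@[fun_prop]
lemma Continuous.qpoch (hq0 : 0 < q) {f : ℝ → ℝ} (hf : Continuous f) (k : ℕ) :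
    Continuous fun x => qpoch q (f x) k :=
  continuous_finsetProd _ fun _ _ => (continuous_qnum hq0).comp (hf.add continuous_const)

end QPochhammer

lemma eq_of_continuous_of_forall_ne_add_natCast {f g : ℝ → ℝ} (hf : Continuous f)
    (hg : Continuous g) (a : ℝ) (h : ∀ x, (∀ k : ℕ, x ≠ a + (k + 1)) → f x = g x) : f = g :=
  Continuous.ext_on ((Set.countable_range fun k : ℕ => a + (k + 1)).dense_compl ℝ) hf hg
    fun x hx => h x fun k hk => hx ⟨k, hk.symm⟩

section WellPoised

/-- The summand of `sum_qpoch_wellPoised` without its factor `[A + 2s]`, multiplied by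
`(1)_K (A+K+1)_K (A-B+1)_K (A-C+1)_K`; this cancels its denominator (`qpoch_mul_qpoch_sub`). -/
noncomputable def wellPoisedTerm (q A B C : ℝ) (K s : ℕ) : ℝ :=
  qpoch q A s * qpoch q B s * qpoch q C s * qpoch q (-(K : ℝ)) s *
    (qpoch q (1 + s) (K - s) * qpoch q (A - B + 1 + s) (K - s) *
      qpoch q (A - C + 1 + s) (K - s) * qpoch q (A + K + 1 + s) (K - s))

noncomputable def wellPoisedSum (q A B C : ℝ) (K : ℕ) : ℝ :=
  ∑ s ∈ range (K + 1), wellPoisedTerm q A B C K s * qnum q (A + 2 * s)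

noncomputable def wellPoisedCert (q A B C : ℝ) (M s : ℕ) : ℝ :=
  qnum q s * qnum q (A - B + s) * qnum q (A - C + s) * qnum q (A + (M + 1) + s) *
    wellPoisedTerm q A B C (M + 1) s

variable {q A B C : ℝ}

lemma wellPoisedTerm_length_succ {M s : ℕ} (hs : s ≤ M) :
    qnum q (s - (M + 1)) * qnum q (A + (M + 1) + s) * wellPoisedTerm q A B C (M + 1) s =
      -(qnum q (M + 1) ^ 2 * qnum q (A - B + (M + 1)) * qnum q (A - C + (M + 1)) *
        qnum q (A + 2 * M + 1) * qnum q (A + 2 * M + 2) * wellPoisedTerm q A B C M s) := by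
  have hK := qpoch_succ (q := q) (-((M : ℝ) + 1)) s
  rw [qpoch_succ', qnum_neg] at hK
  have hA := (qpoch_succ_sub (q := q) hs (A + M + 1)).symm.trans (qpoch_succ_sub' hs _)
  simp only [wellPoisedTerm, Nat.cast_add, Nat.cast_one, qpoch_succ_sub hs]
  ring_nf at hK hA ⊢
  grind

lemma wellPoisedTerm_index_succ {M s : ℕ} (hs : s ≤ M) :
    qnum q (s + 1) * qnum q (A - B + (s + 1)) * qnum q (A - C + (s + 1)) *
        qnum q (A + (M + 1) + (s + 1)) * wellPoisedTerm q A B C (M + 1) (s + 1) =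
      qnum q (A + s) * qnum q (B + s) * qnum q (C + s) * qnum q (s - (M + 1)) *
        wellPoisedTerm q A B C (M + 1) s := by
  simp only [wellPoisedTerm, Nat.cast_add, Nat.cast_one, Nat.add_sub_add_right, qpoch_succ,
    qpoch_succ_sub' hs]
  ring_nf

lemma wellPoisedTerm_of_lt {K s : ℕ} (h : K < s) : wellPoisedTerm q A B C K s = 0 := by
  simp only [wellPoisedTerm, qpoch_neg_natCast_of_lt h, mul_zero, zero_mul]

lemma wellPoisedCert_zero (M : ℕ) : wellPoisedCert q A B C M 0 = 0 := by
  simp only [wellPoisedCert, Nat.cast_zero, qnum_zero, zero_mul]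

lemma wellPoisedCert_of_lt {M s : ℕ} (h : M + 1 < s) : wellPoisedCert q A B C M s = 0 := by
  rw [wellPoisedCert, wellPoisedTerm_of_lt h, mul_zero]

lemma wellPoisedTerm_telescope (hq0 : 0 < q) {M s : ℕ} (hs : s ≤ M + 1) :
    qnum q (M + 1) * qnum q (A - B + (M + 1)) * qnum q (A - C + (M + 1)) *
        (wellPoisedTerm q A B C (M + 1) s * qnum q (A + 2 * s) -
          qnum q (M + 1) * qnum q (A - B - C + (M + 1)) * qnum q (A + 2 * M + 1) *
            qnum q (A + 2 * M + 2) * (wellPoisedTerm q A B C M s * qnum q (A + 2 * s))) =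
      wellPoisedCert q A B C M s - wellPoisedCert q A B C M (s + 1) := by
  rcases hs.lt_or_eq with hs | rfl
  · have hs : s ≤ M := Nat.lt_succ_iff.1 hs
    simp only [wellPoisedCert, Nat.cast_add, Nat.cast_one]
    linear_combination (norm := ring_nf)
      wellPoisedTerm q A B C (M + 1) s * qnum_wz_identity hq0 A B C s (M + 1) -
        qnum q (A - B - C + (M + 1)) * qnum q (A + 2 * s) *
          wellPoisedTerm_length_succ (A := A) (B := B) (C := C) hs +
        wellPoisedTerm_index_succ (A := A) (B := B) (C := C) hs
  · rw [wellPoisedTerm_of_lt (Nat.lt_succ_self M), wellPoisedCert_of_lt (Nat.lt_succ_self _)]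
    simp only [wellPoisedCert, Nat.cast_add, Nat.cast_one]
    ring_nf

lemma wellPoisedSum_recurrence (hq0 : 0 < q) (M : ℕ) :
    qnum q (M + 1) * qnum q (A - B + (M + 1)) * qnum q (A - C + (M + 1)) *
        (wellPoisedSum q A B C (M + 1) -
          qnum q (M + 1) * qnum q (A - B - C + (M + 1)) * qnum q (A + 2 * M + 1) *
            qnum q (A + 2 * M + 2) * wellPoisedSum q A B C M) = 0 := by
  have hM : wellPoisedSum q A B C M =
      ∑ s ∈ range (M + 2), wellPoisedTerm q A B C M s * qnum q (A + 2 * s) := by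
    rw [sum_range_succ, wellPoisedTerm_of_lt (Nat.lt_succ_self M), zero_mul, add_zero,
      wellPoisedSum]
  rw [hM, wellPoisedSum, mul_sum, ← sum_sub_distrib, mul_sum,
    sum_congr rfl fun s hs => wellPoisedTerm_telescope hq0 (Nat.lt_succ_iff.1 (mem_range.1 hs)),
    sum_range_sub', wellPoisedCert_zero, wellPoisedCert_of_lt (Nat.lt_succ_self _), sub_zero]

lemma wellPoisedSum_eq_of_forall_ne (hq0 : 0 < q) (hq1 : q ≠ 1)
    (hB : ∀ k : ℕ, B ≠ A + (k + 1)) (hC : ∀ k : ℕ, C ≠ A + (k + 1)) (M : ℕ) :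
    wellPoisedSum q A B C M =
      qnum q A * qpoch q (A + 1) (2 * M) * qpoch q (A - B - C + 1) M * qpoch q 1 M := by
  induction M with
  | zero => simp [wellPoisedSum, wellPoisedTerm, qpoch]
  | succ M ih =>
    have hfactor :
        qnum q (M + 1) * qnum q (A - B + (M + 1)) * qnum q (A - C + (M + 1)) ≠ 0 := by
      refine mul_ne_zero (mul_ne_zero ?_ ?_) ?_ <;> refine qnum_ne_zero hq0 hq1 ?_
      · positivity
      · exact fun h => hB M (by linarith)
      · exact fun h => hC M (by linarith)
    rw [sub_eq_zero.1 ((mul_eq_zero.1 (wellPoisedSum_recurrence hq0 M)).resolve_left hfactor),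
      ih, show 2 * (M + 1) = 2 * M + 1 + 1 by ring]
    simp only [qpoch_succ, Nat.cast_add, Nat.cast_one, Nat.cast_mul, Nat.cast_ofNat]
    ring_nf

theorem wellPoisedSum_eq (hq0 : 0 < q) (hq1 : q ≠ 1) (M : ℕ) :
    wellPoisedSum q A B C M =
      qnum q A * qpoch q (A + 1) (2 * M) * qpoch q (A - B - C + 1) M * qpoch q 1 M := by
  have hgeneric : ∀ B', (∀ k : ℕ, B' ≠ A + (k + 1)) → ∀ C', wellPoisedSum q A B' C' M =
      qnum q A * qpoch q (A + 1) (2 * M) * qpoch q (A - B' - C' + 1) M * qpoch q 1 M :=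
    fun B' hB' => congrFun (eq_of_continuous_of_forall_ne_add_natCast
      (by unfold wellPoisedSum wellPoisedTerm; fun_prop (disch := exact hq0))
      (by fun_prop (disch := exact hq0)) A
      fun C' hC' => wellPoisedSum_eq_of_forall_ne hq0 hq1 hB' hC' M)
  exact congrFun (eq_of_continuous_of_forall_ne_add_natCast
    (f := fun B' => wellPoisedSum q A B' C M)
    (by unfold wellPoisedSum wellPoisedTerm; fun_prop (disch := exact hq0))
    (by fun_prop (disch := exact hq0)) A fun B' hB' => hgeneric B' hB' C) B

end WellPoised

theorem sum_qpoch_wellPoised {q : ℝ} (hq0 : 0 < q) (hq1 : q ≠ 1) (M : ℕ) (A B C : ℝ)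
    (hM : qpoch q (A + M + 1) M ≠ 0) (hB : qpoch q (A - B + 1) M ≠ 0)
    (hC : qpoch q (A - C + 1) M ≠ 0) :
    ∑ s ∈ range (M + 1),
        qpoch q A s * qpoch q B s * qpoch q C s * qpoch q (-(M : ℝ)) s /
            (qpoch q 1 s * qpoch q (A + M + 1) s * qpoch q (A - B + 1) s *
              qpoch q (A - C + 1) s) * qnum q (A + 2 * s) =
      qnum q A * (qpoch q (A + 1) M * qpoch q (A - B - C + 1) M /
        (qpoch q (A - B + 1) M * qpoch q (A - C + 1) M)) := by
  have h1 := qpoch_one_ne_zero hq0 hq1 M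
  have hterm : ∀ s ∈ range (M + 1),
      qpoch q A s * qpoch q B s * qpoch q C s * qpoch q (-(M : ℝ)) s /
            (qpoch q 1 s * qpoch q (A + M + 1) s * qpoch q (A - B + 1) s *
              qpoch q (A - C + 1) s) * qnum q (A + 2 * s) =
        wellPoisedTerm q A B C M s * qnum q (A + 2 * s) /
          (qpoch q 1 M * qpoch q (A + M + 1) M * qpoch q (A - B + 1) M *
            qpoch q (A - C + 1) M) := by
    intro s hs
    have hs : s ≤ M := Nat.lt_succ_iff.1 (mem_range.1 hs)
    have := qpoch_ne_zero_of_le h1 hs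
    have := qpoch_ne_zero_of_le hM hs
    have := qpoch_ne_zero_of_le hB hs
    have := qpoch_ne_zero_of_le hC hs
    rw [eq_div_iff (by positivity), wellPoisedTerm, ← qpoch_mul_qpoch_sub hs 1,
      ← qpoch_mul_qpoch_sub hs (A + M + 1), ← qpoch_mul_qpoch_sub hs (A - B + 1),
      ← qpoch_mul_qpoch_sub hs (A - C + 1)]
    field_simp
  rw [sum_congr rfl hterm, ← sum_div, ← wellPoisedSum, wellPoisedSum_eq hq0 hq1, two_mul,
    qpoch_add, show A + 1 + M = A + M + 1 by ring]
  field_simp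

theorem stmt_8_general (q : ℝ) (hq0 : 0 < q) (hq1 : q ≠ 1) (N : ℕ) (n : ℕ) (hn : n < N)
    (a α β : ℝ)
    (hnz : qpoch q (a + (a + N) + 1) (N - n - 1) * qpoch q (2 * a - β + 1) (N - n - 1) *
      qpoch q (a - (a + N) - α + 1) (N - n - 1) ≠ 0) :
    ∑ s ∈ Finset.range (N - n),
        qpoch q (2 * a + (n : ℝ) + 1) s * qpoch q ((n : ℝ) + β + 1) s *
            qpoch q ((n : ℝ) + a + α + (a + N) + 1) s * qpoch q ((n : ℝ) + 1 - N) s /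
            (qpoch q 1 s * qpoch q (a + (a + N) + 1) s * qpoch q (2 * a - β + 1) s *
              qpoch q (a - (a + N) - α + 1) s) *
          qnum q (2 * (s : ℝ) + 2 * a + (n : ℝ) + 1) =
      qnum q (2 * a + (n : ℝ) + 1) *
        (qpoch q (2 * a + (n : ℝ) + 2) (N - n - 1) *
            qpoch q (a - (a + N) - α - β - (n : ℝ)) (N - n - 1) /
          (qpoch q (2 * a - β + 1) (N - n - 1) * qpoch q (a - (a + N) - α + 1) (N - n - 1))) := by
  obtain ⟨M, rfl⟩ : ∃ M, N = n + M + 1 := ⟨N - n - 1, by omega⟩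
  rw [show n + M + 1 - n - 1 = M by omega] at hnz ⊢
  rw [show n + M + 1 - n = M + 1 by omega]
  simp only [mul_ne_zero_iff] at hnz
  obtain ⟨⟨hM, hB⟩, hC⟩ := hnz
  have hM' : qpoch q (2 * a + n + 1 + M + 1) M ≠ 0 := by convert hM using 2; push_cast; ring
  have hB' : qpoch q (2 * a + n + 1 - (n + β + 1) + 1) M ≠ 0 := by convert hB using 2; ring
  have hC' : qpoch q (2 * a + n + 1 - (n + a + α + (a + (n + M + 1)) + 1) + 1) M ≠ 0 := by
    convert hC using 2; push_cast; ring
  refine (sum_congr rfl fun s _ => ?_).trans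
    ((sum_qpoch_wellPoised hq0 hq1 M _ _ _ hM' hB' hC').trans ?_) <;> push_cast <;> ring_nf

theorem stmt_8 (q : ℝ) (hq0 : 0 < q) (hq1 : q ≠ 1) (N : ℕ) (hN : 1 ≤ N) (n : ℕ) (hn : n < N)
    (a α β : ℝ)
    (hnz : qpoch q (a + (a + N) + 1) (N - n - 1) * qpoch q (2 * a - β + 1) (N - n - 1) *
      qpoch q (a - (a + N) - α + 1) (N - n - 1) ≠ 0) :
    ∑ s ∈ Finset.range (N - n),
        qpoch q (2 * a + (n : ℝ) + 1) s * qpoch q ((n : ℝ) + β + 1) s *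
            qpoch q ((n : ℝ) + a + α + (a + N) + 1) s * qpoch q ((n : ℝ) + 1 - N) s /
            (qpoch q 1 s * qpoch q (a + (a + N) + 1) s * qpoch q (2 * a - β + 1) s *
              qpoch q (a - (a + N) - α + 1) s) *
          qnum q (2 * (s : ℝ) + 2 * a + (n : ℝ) + 1) =
      qnum q (2 * a + (n : ℝ) + 1) *
        (qpoch q (2 * a + (n : ℝ) + 2) (N - n - 1) *
            qpoch q (a - (a + N) - α - β - (n : ℝ)) (N - n - 1) /
          (qpoch q (2 * a - β + 1) (N - n - 1) * qpoch q (a - (a + N) - α + 1) (N - n - 1))) :=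
  stmt_8_general q hq0 hq1 N n hn a α β hnz
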